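/- Let u(t) be the Hastings–McLeod solution of Painlevé II: u'' = 2u³ + t·u with u(t) ~ Ai(t) as t → +∞. Define v(t) = ∫ₜ^∞ u², E(t) = exp(-∫ₜ^∞ u), and let f, g solve the linear ODE system ∂_w (f, g)ᵀ = [[u², -wu - u'], [-wu + u', w² - t - u²]] (f, g)ᵀ with f(t,0) = g(t,0) = E(t). If additionally f and g satisfy the companion Lax equation in t, then F(t,w) = f(t,w)·exp(-∫ₜ^∞ v) satisfies the PDE ∂_t F + (2/β)∂_w² F + (t - w²)∂_w F = 0 with β = 2. -/

import Mathlib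

/-!
Inserting the two Lax equations into the PDE, the terms in `g` cancel identically and the
coefficient of `f` is `v + u⁴ + t u² - u'²`. This vanishes by the first integral of Painlevé II:
`u'² - u⁴ - t u² - v` has derivative zero, and its constant value `C` is `0` because `u → 0` and
`u² ∈ L¹`. If `C > 0`, then `u'² ≥ C` for `t ≥ 0`, whereas by the mean value theorem a
convergent `u` has arbitrarily small slopes near `+∞`. If `C < 0`, then eventually `t u² ≥ -C/2`, and `u²` cannot be integrable.
-/

open MeasureTheory Set Filter Topology

lemma hasDerivAt_integral_Ioi {h : ℝ → ℝ} (hc : Continuous h)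
    (hi : ∀ x, IntegrableOn h (Ioi x)) (t : ℝ) :
    HasDerivAt (fun x => ∫ s in Ioi x, h s) (-h t) t := by
  have hsplit : (fun x => ∫ s in Ioi x, h s) =
      fun x => (∫ s in Ioi (0 : ℝ), h s) - ∫ s in (0 : ℝ)..x, h s := by
    funext x
    rw [← intervalIntegral.integral_Ioi_sub_Ioi' (hi 0) (hi x)]
    ring
  rw [hsplit]
  exact (hc.integral_hasStrictDerivAt 0 t).hasDerivAt.const_sub _

lemma frequently_abs_lt_of_hasDerivAt_of_tendsto {u u' : ℝ → ℝ} {L ε : ℝ}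
    (hu : ∀ t, HasDerivAt u (u' t) t) (hlim : Tendsto u atTop (𝓝 L)) (hε : 0 < ε) :
    ∃ᶠ ξ in atTop, |u' ξ| < ε := by
  have hincr : Tendsto (fun x => u (x + 1) - u x) atTop (𝓝 0) := by
    simpa using ((hlim.comp (tendsto_atTop_add_const_right _ 1 tendsto_id)).sub hlim)
  rw [frequently_atTop]
  intro a
  obtain ⟨b, hb⟩ := eventually_atTop.mp (hincr.eventually (Metric.ball_mem_nhds 0 hε))
  obtain ⟨ξ, hξ, hslope⟩ := exists_hasDerivAt_eq_slope u u' (lt_add_one (max a b))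
    (fun y _ => (hu y).continuousAt.continuousWithinAt) (fun y _ => hu y)
  refine ⟨ξ, (le_max_left a b).trans hξ.1.le, ?_⟩
  rw [hslope, add_sub_cancel_left, div_one]
  simpa [Real.dist_eq] using hb _ (le_max_right a b)

lemma not_integrableOn_Ioi_of_eventually_le_mul {h : ℝ → ℝ} {ε : ℝ} (hε : 0 < ε)
    (hge : ∀ᶠ t in atTop, ε ≤ t * h t) (a : ℝ) : ¬ IntegrableOn h (Ioi a) := by
  intro hint
  obtain ⟨b, hb⟩ := eventually_atTop.mp (hge.and (eventually_gt_atTop 0))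
  have hinv : IntegrableOn (·⁻¹) (Ioi (max a b)) := by
    refine Integrable.mono' ((hint.mono_set (Ioi_subset_Ioi (le_max_left a b))).const_mul ε⁻¹)
      measurable_inv.aestronglyMeasurable ((ae_restrict_iff' measurableSet_Ioi).mpr ?_)
    refine Eventually.of_forall fun t ht => ?_
    obtain ⟨hle, hpos⟩ := hb t ((le_max_right a b).trans (mem_Ioi.mp ht).le)
    rw [Real.norm_of_nonneg (inv_nonneg.mpr hpos.le), inv_le_iff_one_le_mul₀ hpos]
    calc (1 : ℝ) = ε⁻¹ * ε := (inv_mul_cancel₀ hε.ne').symm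
      _ ≤ ε⁻¹ * (t * h t) := by gcongr
      _ = ε⁻¹ * h t * t := by ring
  exact not_integrableOn_Ioi_inv hinv

theorem painleveII_first_integral {u u' : ℝ → ℝ} (hu' : ∀ t, HasDerivAt u (u' t) t)
    (hPII : ∀ t, HasDerivAt u' (2 * u t ^ 3 + t * u t) t) (hu0 : Tendsto u atTop (𝓝 0))
    (hint : ∀ t, IntegrableOn (fun s => u s ^ 2) (Ioi t)) (t : ℝ) :
    u' t ^ 2 = u t ^ 4 + t * u t ^ 2 + ∫ s in Ioi t, u s ^ 2 := by
  set V : ℝ → ℝ := fun t => ∫ s in Ioi t, u s ^ 2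
  set H : ℝ → ℝ := fun t => u' t ^ 2 - u t ^ 4 - t * u t ^ 2 - V t
  have hV : ∀ s, HasDerivAt V (-(u s ^ 2)) s :=
    hasDerivAt_integral_Ioi ((continuous_iff_continuousAt.mpr fun s => (hu' s).continuousAt).pow 2)
      hint
  have hH : ∀ s, HasDerivAt H 0 s := fun s =>
    ((((hPII s).pow 2).sub ((hu' s).pow 4)).sub ((hasDerivAt_id' s).mul ((hu' s).pow 2))).sub
      (hV s) |>.congr_deriv (by simp only [Pi.pow_apply]; ring)
  have hconst : ∀ s, H s = H 0 := fun s =>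
    is_const_of_deriv_eq_zero (fun x => (hH x).differentiableAt) (fun x => (hH x).deriv) s 0
  suffices hH0 : H 0 = 0 by linarith [hconst t]
  rcases lt_trichotomy (H 0) 0 with hneg | hzero | hpos
  · exfalso
    have hsmall : Tendsto (fun s => u s ^ 4 + V s) atTop (𝓝 0) := by
      simpa using (hu0.pow 4).add (tendsto_integral_Ioi_zero tendsto_id)
    refine not_integrableOn_Ioi_of_eventually_le_mul (half_pos (neg_pos.mpr hneg)) ?_ 0 (hint 0)
    filter_upwards [hsmall.eventually (gt_mem_nhds (half_pos (neg_pos.mpr hneg)))] with s hs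
    nlinarith [hconst s, sq_nonneg (u' s)]
  · exact hzero
  · exfalso
    have hbig : ∀ s, 0 ≤ s → H 0 ≤ u' s ^ 2 := fun s hs => by
      have hVs : 0 ≤ V s := setIntegral_nonneg measurableSet_Ioi fun x _ => sq_nonneg (u x)
      nlinarith [hconst s, pow_nonneg (sq_nonneg (u s)) 2, mul_nonneg hs (sq_nonneg (u s))]
    obtain ⟨ξ, hsmall, hξ⟩ := ((frequently_abs_lt_of_hasDerivAt_of_tendsto hu' hu0
      (Real.sqrt_pos.mpr hpos)).and_eventually (eventually_ge_atTop 0)).exists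
    have hsq := sq_lt_sq' (abs_lt.mp hsmall).1 (abs_lt.mp hsmall).2
    rw [Real.sq_sqrt hpos.le] at hsq
    linarith [hbig ξ hξ]

/-- `a`, `a'`, `b` stand for `u t`, `u' t`, `v t`, and `c` for `s ↦ exp (-∫ₛ^∞ v)`. -/
theorem lax_pair_pde {f g : ℝ → ℝ → ℝ} {c : ℝ → ℝ} {t w a a' b : ℝ}
    (hfw : ∀ x, HasDerivAt (fun y => f t y) (a ^ 2 * f t x + (-(x * a) - a') * g t x) x)
    (hgw : HasDerivAt (fun y => g t y)
      ((-(w * a) + a') * f t w + (w ^ 2 - t - a ^ 2) * g t w) w)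
    (hft : HasDerivAt (fun s => f s w) (a * g t w) t) (hc : HasDerivAt c (b * c t) t)
    (hfirst : a' ^ 2 = a ^ 4 + t * a ^ 2 + b) :
    deriv (fun s => f s w * c s) t + deriv (deriv (fun x => f t x * c t)) w +
      (t - w ^ 2) * deriv (fun x => f t x * c t) w = 0 := by
  have hFt : HasDerivAt (fun s => f s w * c s) (a * g t w * c t + f t w * (b * c t)) t :=
    hft.mul hc
  have hFw : deriv (fun x => f t x * c t) =
      fun x => (a ^ 2 * f t x + (-(x * a) - a') * g t x) * c t :=
    funext fun x => ((hfw x).mul_const _).deriv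
  have hFww : HasDerivAt (fun x => (a ^ 2 * f t x + (-(x * a) - a') * g t x) * c t)
      ((a ^ 2 * (a ^ 2 * f t w + (-(w * a) - a') * g t w) + (-a * g t w + (-(w * a) - a') *
        ((-(w * a) + a') * f t w + (w ^ 2 - t - a ^ 2) * g t w))) * c t) w := by
    have hlin : HasDerivAt (fun x : ℝ => -(x * a) - a') (-a) w := by
      simpa using ((hasDerivAt_id w).mul_const a).neg.sub_const a'
    exact (((hfw w).const_mul _).add (hlin.mul hgw)).mul_const _
  rw [hFt.deriv, hFw, hFww.deriv]
  linear_combination (-(f t w * c t)) * hfirst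

theorem stmt_18_general
    (Ai u u' v : ℝ → ℝ) (f g F : ℝ → ℝ → ℝ)
    (hAi0 : Tendsto Ai atTop (nhds 0))
    (hu' : ∀ t, HasDerivAt u (u' t) t)
    (hPII : ∀ t, HasDerivAt u' (2 * u t ^ 3 + t * u t) t)
    (hHM : Tendsto (fun t => u t / Ai t) atTop (nhds 1))
    (hint2 : ∀ t, IntegrableOn (fun s => u s ^ 2) (Ioi t))
    (hv : v = fun t => ∫ s in Ioi t, u s ^ 2)
    (hintv : ∀ t, IntegrableOn v (Ioi t))
    (hfw : ∀ t w, HasDerivAt (fun x => f t x)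
      (u t ^ 2 * f t w + (-(w * u t) - u' t) * g t w) w)
    (hgw : ∀ t w, HasDerivAt (fun x => g t x)
      ((-(w * u t) + u' t) * f t w + (w ^ 2 - t - u t ^ 2) * g t w) w)
    (hft : ∀ t w, HasDerivAt (fun s => f s w) (u t * g t w) t)
    (hF : F = fun t w => f t w * Real.exp (-∫ s in Ioi t, v s)) :
    ∀ t w : ℝ,
      deriv (fun s => F s w) t + deriv (deriv (fun x => F t x)) w +
        (t - w ^ 2) * deriv (fun x => F t x) w = 0 := by
  intro t w
  have hu0 : Tendsto u atTop (𝓝 0) := by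
    refine (mul_zero (1 : ℝ) ▸ hHM.mul hAi0).congr' ?_
    filter_upwards [hHM.eventually_ne one_ne_zero] with s hs
    exact div_mul_cancel₀ _ fun h => hs (by simp [h])
  have hv' : ∀ s, HasDerivAt v (-(u s ^ 2)) s := hv ▸ hasDerivAt_integral_Ioi
    ((continuous_iff_continuousAt.mpr fun s => (hu' s).continuousAt).pow 2) hint2
  have hc : HasDerivAt (fun s => Real.exp (-∫ x in Ioi s, v x))
      (v t * Real.exp (-∫ x in Ioi t, v x)) t := by
    simpa [mul_comm] using (hasDerivAt_integral_Ioi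
      (continuous_iff_continuousAt.mpr fun s => (hv' s).continuousAt) hintv t).neg.exp
  subst hF
  exact lax_pair_pde (hfw t) (hgw t w) (hft t w) hc
    (hv ▸ painleveII_first_integral hu' hPII hu0 hint2 t)

/-- Bloemendal–Virág verification at `β = 2`: if `u` is the Hastings–McLeod
solution of Painlevé II (`u'' = 2u³ + tu`, `u ~ Ai` at `+∞`),
`v(t) = ∫ₜ^∞ u²`, `E(t) = exp(-∫ₜ^∞ u)`, and `(f,g)` solve the Painlevé II Lax
pair in `w` and in `t` with initial condition `f(t,0) = g(t,0) = E(t)`, then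
`F(t,w) = f(t,w) exp(-∫ₜ^∞ v)` solves `∂ₜF + ∂_w²F + (t - w²)∂_wF = 0`. -/
theorem stmt_18
    (Ai Ai' u u' v E : ℝ → ℝ) (f g F : ℝ → ℝ → ℝ)
    (hAi' : ∀ t, HasDerivAt Ai (Ai' t) t)
    (hAi'' : ∀ t, HasDerivAt Ai' (t * Ai t) t)
    (hAi0 : Tendsto Ai atTop (nhds 0))
    (hu' : ∀ t, HasDerivAt u (u' t) t)
    (hPII : ∀ t, HasDerivAt u' (2 * u t ^ 3 + t * u t) t)
    (hHM : Tendsto (fun t => u t / Ai t) atTop (nhds 1))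
    (hint1 : ∀ t, IntegrableOn u (Ioi t))
    (hint2 : ∀ t, IntegrableOn (fun s => u s ^ 2) (Ioi t))
    (hv : v = fun t => ∫ s in Ioi t, u s ^ 2)
    (hintv : ∀ t, IntegrableOn v (Ioi t))
    (hE : E = fun t => Real.exp (-∫ s in Ioi t, u s))
    (hfw : ∀ t w, HasDerivAt (fun x => f t x)
      (u t ^ 2 * f t w + (-(w * u t) - u' t) * g t w) w)
    (hgw : ∀ t w, HasDerivAt (fun x => g t x)
      ((-(w * u t) + u' t) * f t w + (w ^ 2 - t - u t ^ 2) * g t w) w)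
    (hic : ∀ t, f t 0 = E t ∧ g t 0 = E t)
    (hft : ∀ t w, HasDerivAt (fun s => f s w) (u t * g t w) t)
    (hgt : ∀ t w, HasDerivAt (fun s => g s w) (u t * f t w - w * g t w) t)
    (hF : F = fun t w => f t w * Real.exp (-∫ s in Ioi t, v s)) :
    ∀ t w : ℝ,
      deriv (fun s => F s w) t + deriv (deriv (fun x => F t x)) w +
        (t - w ^ 2) * deriv (fun x => F t x) w = 0 :=
  stmt_18_general Ai u u' v f g F hAi0 hu' hPII hHM hint2 hv hintv hfw hgw hft hF
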